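/- Let d ≥ 1, let h_* : ℝ^d × ℝ^d → ℝ be a measurable kernel such that y ↦ h_*(x,y) f(y) φ(y) is integrable for the functions considered, and let q ∈ (0,1]. Define the operators A f(x) = ∫_{ℝ^d} h_*(x,y) f(y) φ(y) dy for f : ℝ^d → ℝ, and B g(x, w) = w q ∫_{ℝ^d} h_*(x,y) g(y,1) φ(y) dy for g : ℝ^d × {0,1} → ℝ. Then: (i) if f is not identically zero and A f = κ f, then g(x,w) := w f(x) is not identically zero and satisfies B g = (q κ) g; (ii) conversely, if g is not identically zero and B g = ζ g for some ζ ≠ 0, then g(x,0) = 0 for all x, and f := g(·,1) is not identically zero and satisfies A f = (ζ/q) f. Consequently, the nonzero eigenvalues of B are exactly q times the nonzero eigenvalues of A. -/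
import Mathlib


open MeasureTheory Real

/-- Density of the `d`-variate standard normal distribution,
`φ(y) = (2π)^{-d/2} exp(-‖y‖²/2)`, with `‖y‖² = ∑ i, y i ^ 2`. -/
noncomputable def gaussDensity (d : ℕ) (y : Fin d → ℝ) : ℝ :=
  (2 * π) ^ (-(d : ℝ) / 2) * Real.exp (-(∑ i, y i ^ 2) / 2)

/-- Correspondence between eigenvalues of the complete-data BHEP operator
`A f(x) = ∫ h_*(x,y) f(y) φ(y) dy` and the complete-case operator
`B g(x,w) = w q ∫ h_*(x,y) g(y,1) φ(y) dy` (for `w ∈ {0,1}`):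
(i) if `A f = κ f` with `f ≢ 0`, then `g(x,w) := w f(x)` is `≢ 0` on `ℝ^d × {0,1}` and
`B g = (qκ) g`; (ii) if `B g = ζ g` with `ζ ≠ 0` and `g ≢ 0` on `ℝ^d × {0,1}`, then
`g(·,0) = 0` and `f := g(·,1) ≢ 0` satisfies `A f = (ζ/q) f`. Consequently the set of nonzero
eigenvalues of `B` is exactly `q` times the set of nonzero eigenvalues of `A`. -/
theorem eigenvalue_correspondence_complete_case (d : ℕ) (hd : 1 ≤ d)
    (hstar : (Fin d → ℝ) → (Fin d → ℝ) → ℝ)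
    (hmeas : Measurable (Function.uncurry hstar))
    (q : ℝ) (hq : q ∈ Set.Ioc (0 : ℝ) 1) :
    (∀ (f : (Fin d → ℝ) → ℝ) (κ : ℝ),
        (∀ x, Integrable (fun y => hstar x y * f y * gaussDensity d y)) →
        (∃ x, f x ≠ 0) →
        (∀ x, (∫ y : Fin d → ℝ, hstar x y * f y * gaussDensity d y) = κ * f x) →
        ((∃ x, ∃ w ∈ ({0, 1} : Set ℝ), w * f x ≠ 0) ∧
          ∀ x, ∀ w ∈ ({0, 1} : Set ℝ),
            w * q * (∫ y : Fin d → ℝ, hstar x y * ((1 : ℝ) * f y) * gaussDensity d y)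
              = (q * κ) * (w * f x))) ∧
    (∀ (g : (Fin d → ℝ) → ℝ → ℝ) (ζ : ℝ), ζ ≠ 0 →
        (∀ x, Integrable (fun y => hstar x y * g y 1 * gaussDensity d y)) →
        (∃ x, ∃ w ∈ ({0, 1} : Set ℝ), g x w ≠ 0) →
        (∀ x, ∀ w ∈ ({0, 1} : Set ℝ),
          w * q * (∫ y : Fin d → ℝ, hstar x y * g y 1 * gaussDensity d y) = ζ * g x w) →
        ((∀ x, g x 0 = 0) ∧ (∃ x, g x 1 ≠ 0) ∧
          ∀ x, (∫ y : Fin d → ℝ, hstar x y * g y 1 * gaussDensity d y) = (ζ / q) * g x 1)) ∧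
    ({ζ : ℝ | ζ ≠ 0 ∧ ∃ g : (Fin d → ℝ) → ℝ → ℝ,
        (∀ x, Integrable (fun y => hstar x y * g y 1 * gaussDensity d y)) ∧
        (∃ x, ∃ w ∈ ({0, 1} : Set ℝ), g x w ≠ 0) ∧
        (∀ x, ∀ w ∈ ({0, 1} : Set ℝ),
          w * q * (∫ y : Fin d → ℝ, hstar x y * g y 1 * gaussDensity d y) = ζ * g x w)}
      = (fun κ => q * κ) '' {κ : ℝ | κ ≠ 0 ∧ ∃ f : (Fin d → ℝ) → ℝ,
          (∀ x, Integrable (fun y => hstar x y * f y * gaussDensity d y)) ∧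
          (∃ x, f x ≠ 0) ∧
          (∀ x, (∫ y : Fin d → ℝ, hstar x y * f y * gaussDensity d y) = κ * f x)}) := by
  obtain ⟨hq0, hq1⟩ := hq
  refine ⟨?_, ?_, ?_⟩
  · intro f κ hint ⟨x0, hx0⟩ heig
    refine ⟨⟨x0, 1, by simp, by simpa using hx0⟩, ?_⟩
    intro x w hw
    simp only [one_mul]
    rw [heig x]
    ring
  · intro g ζ hζ hint hne heig
    have h0 : ∀ x, g x 0 = 0 := by
      intro x
      have := heig x 0 (by simp)
      simp at this
      rcases this with h | h
      · exact absurd h hζ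
      · exact h
    refine ⟨h0, ?_, ?_⟩
    · obtain ⟨x, w, hw, hgx⟩ := hne
      rcases hw with rfl | hw
      · exact absurd (h0 x) hgx
      · simp at hw; subst hw; exact ⟨x, hgx⟩
    · intro x
      have := heig x 1 (by simp)
      simp only [one_mul] at this
      field_simp
      linarith [this]
  · ext ζ
    simp only [Set.mem_setOf_eq, Set.mem_image]
    constructor
    · rintro ⟨hζ, g, hint, hne, heig⟩
      have h0 : ∀ x, g x 0 = 0 := by
        intro x
        have := heig x 0 (by simp)
        simp at this
        rcases this with h | h
        · exact absurd h hζ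
        · exact h
      refine ⟨ζ / q, ⟨?_, fun x => g x 1, hint, ?_, ?_⟩, by field_simp⟩
      · exact div_ne_zero hζ (ne_of_gt hq0)
      · obtain ⟨x, w, hw, hgx⟩ := hne
        rcases hw with rfl | hw
        · exact absurd (h0 x) hgx
        · simp at hw; subst hw; exact ⟨x, hgx⟩
      · intro x
        have := heig x 1 (by simp)
        simp only [one_mul] at this
        field_simp
        linarith [this]
    · rintro ⟨κ, ⟨hκ, f, hint, ⟨x0, hx0⟩, heig⟩, rfl⟩
      refine ⟨mul_ne_zero (ne_of_gt hq0) hκ, fun x w => w * f x, ?_, ⟨x0, 1, by simp, by simpa using hx0⟩, ?_⟩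
      · intro x; simpa [one_mul] using hint x
      · intro x w hw
        simp only [one_mul]
        rw [heig x]
        ring
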